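/- The set U(n) = {u^1,…,u^{n-1}} of vertex labels of T_n is an orthogonal set of nonzero vectors in ℝ^n: for i ≠ j, u^i · u^j = 0. -/

import Mathlib

/-! Every vertex label `u` of `T_n` is nonzero, sums to zero, and takes one value on its positive
support and one on its negative support: `w(m)` has these properties, and a child copies some
`w(a)` onto a support of size `a`. The support of a child lies in the positive or in the negative
support of its parent, so a label in the left subtree of `u` is orthogonal to `u` (which is constant
on its support, while it sums to zero), likewise in the right subtree, and labels in the left and in
the right subtree have disjoint supports. -/

open Finset


open Finset

/-- The vector `w(n)` (as a function of the index `i`): for odd `n`,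
`w(n)_i = (n-1)/2` for even `i` and `-(n+1)/2` for odd `i` (as in Table 1 of the paper); `w(2) = (1,-1)`;
`w(4) = (1,-1,-1,1)`; for even `n = 2m > 4`, `w(n)_i = w(m)_{i mod m}`. -/
def w (n i : ℕ) : ℤ :=
  if h2 : n < 2 then 0
  else if n = 2 then (if i = 0 then 1 else -1)
  else if n = 4 then (if i = 0 ∨ i = 3 then 1 else -1)
  else if n % 2 = 1 then (if i % 2 = 0 then ((n : ℤ) - 1) / 2 else -(((n : ℤ) + 1) / 2))
  else w (n / 2) (i % (n / 2))
termination_by n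
decreasing_by omega

/-- Indices where `u` is positive. -/
def posIdx {n : ℕ} (u : Fin n → ℤ) : Finset (Fin n) :=
  Finset.univ.filter (fun i => 0 < u i)

/-- Indices where `u` is negative. -/
def negIdx {n : ℕ} (u : Fin n → ℤ) : Finset (Fin n) :=
  Finset.univ.filter (fun i => u i < 0)

/-- The left child of a vertex labeled `u`: supported on the positive support
of `u`, with the `r`-th (in increasing index order) nonzero entry equal to
`w(a')_r` where `a'` is the size of the positive support. -/
def leftChild {n : ℕ} (u : Fin n → ℤ) : Fin n → ℤ := fun i =>
  if 0 < u i then w (posIdx u).card ((posIdx u).filter (fun j => j < i)).card else 0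

/-- The right child of a vertex labeled `u`: supported on the negative support
of `u`, with the `r`-th nonzero entry equal to `w(a'')_r` where `a''` is the
size of the negative support. -/
def rightChild {n : ℕ} (u : Fin n → ℤ) : Fin n → ℤ := fun i =>
  if u i < 0 then w (negIdx u).card ((negIdx u).filter (fun j => j < i)).card else 0

/-- Rooted binary trees with vertex labels in `α`. -/
inductive BT (α : Type) : Type where
  | node (label : α) (l r : Option (BT α)) : BT α

/-- Build the labeled tree below the vertex labeled `u` (with enough fuel this
is the tree described in the paper: a left child exists iff the positive
support has size at least `2`, a right child iff the negative support does). -/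
def build (n : ℕ) : ℕ → (Fin n → ℤ) → BT (Fin n → ℤ)
  | 0, u => .node u none none
  | f + 1, u =>
    .node u
      (if 2 ≤ (posIdx u).card then some (build n f (leftChild u)) else none)
      (if 2 ≤ (negIdx u).card then some (build n f (rightChild u)) else none)

/-- The tree `T_n`, rooted at `w(n)`. (Fuel `n` suffices since the number of
nonzero entries strictly decreases from parent to child.) -/
def T (n : ℕ) : BT (Fin n → ℤ) := build n n (fun i => w n i)

/-- The list of vertex labels of a tree in depth-first (preorder) order. -/
def labels {α : Type} : BT α → List α
  | .node a none none => [a]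
  | .node a (some l) none => a :: labels l
  | .node a none (some r) => a :: labels r
  | .node a (some l) (some r) => a :: (labels l ++ labels r)

/-- A vertex label is skew-symmetric if its nonzero entries form the vector
`w(2) = (1,-1)`. -/
def IsSkew {n : ℕ} (u : Fin n → ℤ) : Prop :=
  ∃ i j : Fin n, i < j ∧ u i = 1 ∧ u j = -1 ∧ ∀ k, k ≠ i → k ≠ j → u k = 0

instance {n : ℕ} (u : Fin n → ℤ) : Decidable (IsSkew u) := by
  unfold IsSkew; infer_instance

lemma w_of_lt_two {n : ℕ} (hn : n < 2) (i : ℕ) : w n i = 0 := by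
  rw [w, dif_pos hn]

lemma w_two (i : ℕ) : w 2 i = if i = 0 then 1 else -1 := by
  rw [w]; simp

lemma w_four (i : ℕ) : w 4 i = if i = 0 ∨ i = 3 then 1 else -1 := by
  rw [w]; simp

lemma w_of_odd {n : ℕ} (hn : 3 ≤ n) (hodd : n % 2 = 1) (i : ℕ) :
    w n i = if i % 2 = 0 then ((n : ℤ) - 1) / 2 else -(((n : ℤ) + 1) / 2) := by
  rw [w, dif_neg (by omega), if_neg (by omega), if_neg (by omega), if_pos hodd]

lemma w_of_even {n : ℕ} (hn : 6 ≤ n) (heven : n % 2 = 0) (i : ℕ) :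
    w n i = w (n / 2) (i % (n / 2)) := by
  rw [w, dif_neg (by omega), if_neg (by omega), if_neg (by omega), if_neg (by omega)]

def SignConst {ι : Type*} (u : ι → ℤ) : Prop :=
  (∀ i j, 0 < u i → 0 < u j → u i = u j) ∧ ∀ i j, u i < 0 → u j < 0 → u i = u j

lemma SignConst.comp {ι κ : Type*} {u : ι → ℤ} (hu : SignConst u) (f : κ → ι) :
    SignConst (u ∘ f) :=
  ⟨fun i j => hu.1 (f i) (f j), fun i j => hu.2 (f i) (f j)⟩

lemma signConst_of_forall_eq_or_eq {ι : Type*} {u : ι → ℤ} {a b : ℤ} (ha : 0 ≤ a) (hb : b ≤ 0)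
    (h : ∀ i, u i = a ∨ u i = b) : SignConst u := by
  constructor <;> intro i j hi hj <;> rcases h i with hi' | hi' <;> rcases h j with hj' | hj' <;>
    omega

lemma signConst_w (n : ℕ) : SignConst (w n) := by
  induction n using Nat.strong_induction_on with
  | _ n ih =>
    rcases (by omega : n < 2 ∨ n = 2 ∨ n = 4 ∨ (3 ≤ n ∧ n % 2 = 1) ∨ (6 ≤ n ∧ n % 2 = 0)) with
      hn | rfl | rfl | ⟨hn, hodd⟩ | ⟨hn, heven⟩
    · exact signConst_of_forall_eq_or_eq le_rfl le_rfl fun i => .inl (w_of_lt_two hn i)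
    · refine signConst_of_forall_eq_or_eq (a := 1) (b := -1) (by norm_num) (by norm_num) fun i => ?_
      rw [w_two]; split_ifs <;> simp
    · refine signConst_of_forall_eq_or_eq (a := 1) (b := -1) (by norm_num) (by norm_num) fun i => ?_
      rw [w_four]; split_ifs <;> simp
    · refine signConst_of_forall_eq_or_eq (a := ((n : ℤ) - 1) / 2) (b := -(((n : ℤ) + 1) / 2))
        (by omega) (by omega) fun i => ?_
      rw [w_of_odd hn hodd]; split_ifs <;> simp
    · have hw : w n = w (n / 2) ∘ (· % (n / 2)) := funext (w_of_even hn heven)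
      rw [hw]
      exact (ih (n / 2) (by omega)).comp _

lemma w_ne_zero {n : ℕ} (hn : 2 ≤ n) (i : ℕ) : w n i ≠ 0 := by
  induction n using Nat.strong_induction_on generalizing i with
  | _ n ih =>
    rcases (by omega : n = 2 ∨ n = 4 ∨ (3 ≤ n ∧ n % 2 = 1) ∨ (6 ≤ n ∧ n % 2 = 0)) with
      rfl | rfl | ⟨hn, hodd⟩ | ⟨hn, heven⟩
    · rw [w_two]; split_ifs <;> simp
    · rw [w_four]; split_ifs <;> simp
    · rw [w_of_odd hn hodd]; split_ifs <;> omega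
    · rw [w_of_even hn heven]
      exact ih (n / 2) (by omega) (by omega) _

lemma sum_range_two_mul_add_one_ite_mod_two {M : Type*} [AddCommMonoid M] (a b : M) (k : ℕ) :
    ∑ i ∈ range (2 * k + 1), (if i % 2 = 0 then a else b) = (k + 1) • a + k • b := by
  induction k with
  | zero => simp
  | succ k ih =>
    rw [show 2 * (k + 1) + 1 = 2 * k + 1 + 1 + 1 by ring, sum_range_succ, sum_range_succ, ih,
      if_neg (by omega), if_pos (by omega)]
    simp only [succ_nsmul]
    abel

lemma sum_range_mod_add_self {M : Type*} [AddCommMonoid M] (g : ℕ → M) (m : ℕ) :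
    ∑ i ∈ range (m + m), g (i % m) = ∑ i ∈ range m, g i + ∑ i ∈ range m, g i := by
  rw [sum_range_add]
  congr 1 <;> refine sum_congr rfl fun i hi => ?_
  · rw [Nat.mod_eq_of_lt (mem_range.mp hi)]
  · rw [Nat.add_mod_left, Nat.mod_eq_of_lt (mem_range.mp hi)]

lemma sum_range_w (n : ℕ) : ∑ i ∈ range n, w n i = 0 := by
  induction n using Nat.strong_induction_on with
  | _ n ih =>
    rcases (by omega : n < 2 ∨ n = 2 ∨ n = 4 ∨ (3 ≤ n ∧ n % 2 = 1) ∨ (6 ≤ n ∧ n % 2 = 0)) with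
      hn | rfl | rfl | ⟨hn, hodd⟩ | ⟨hn, heven⟩
    · exact sum_eq_zero fun i _ => w_of_lt_two hn i
    · simp [sum_range_succ, w_two]
    · simp [sum_range_succ, w_four]
    · obtain ⟨k, rfl⟩ : ∃ k, n = 2 * k + 1 := ⟨n / 2, by omega⟩
      simp_rw [w_of_odd hn hodd, sum_range_two_mul_add_one_ite_mod_two, nsmul_eq_mul]
      push_cast
      rw [show (2 * (k : ℤ) + 1 - 1) / 2 = k by omega, show (2 * (k : ℤ) + 1 + 1) / 2 = k + 1 by omega]
      ring
    · obtain ⟨m, rfl⟩ : ∃ m, n = m + m := ⟨n / 2, by omega⟩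
      simp_rw [w_of_even hn heven, show (m + m) / 2 = m by omega, sum_range_mod_add_self,
        ih m (by omega), add_zero]

section Spread

variable {ι : Type*} [LinearOrder ι]

def rank (s : Finset ι) (i : ι) : ℕ := #{j ∈ s | j < i}

lemma rank_lt_card {s : Finset ι} {i : ι} (hi : i ∈ s) : rank s i < #s :=
  card_lt_card <| filter_ssubset.mpr ⟨i, hi, lt_irrefl i⟩

lemma rank_strictMonoOn (s : Finset ι) : StrictMonoOn (rank s) s := by
  intro i hi j _ hij
  refine card_lt_card <| (ssubset_iff_of_subset fun k => ?_).mpr ⟨i, ?_, ?_⟩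
  · simp only [mem_filter]
    exact fun hk => ⟨hk.1, hk.2.trans hij⟩
  · simp [mem_coe.mp hi, hij]
  · simp

lemma image_rank (s : Finset ι) : s.image (rank s) = range #s := by
  refine eq_of_subset_of_card_le (fun t ht => ?_) ?_
  · obtain ⟨i, hi, rfl⟩ := mem_image.mp ht
    exact mem_range.mpr (rank_lt_card hi)
  · rw [card_range, card_image_of_injOn (rank_strictMonoOn s).injOn]

lemma sum_rank {M : Type*} [AddCommMonoid M] (s : Finset ι) (g : ℕ → M) :
    ∑ i ∈ s, g (rank s i) = ∑ t ∈ range #s, g t := by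
  rw [← image_rank, sum_image (rank_strictMonoOn s).injOn]

def spread (s : Finset ι) (g : ℕ → ℤ) (i : ι) : ℤ := if i ∈ s then g (rank s i) else 0

lemma support_spread_subset (s : Finset ι) (g : ℕ → ℤ) : Function.support (spread s g) ⊆ s :=
  fun _ hi => by_contra fun hs => hi (if_neg hs)

lemma sum_spread [Fintype ι] (s : Finset ι) (g : ℕ → ℤ) :
    ∑ i, spread s g i = ∑ t ∈ range #s, g t := by
  calc ∑ i, spread s g i = ∑ i ∈ s, spread s g i :=
        (sum_subset (subset_univ s) fun _ _ hi => if_neg hi).symm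
    _ = ∑ i ∈ s, g (rank s i) := sum_congr rfl fun _ hi => if_pos hi
    _ = ∑ t ∈ range #s, g t := sum_rank s g

lemma SignConst.spread {g : ℕ → ℤ} (hg : SignConst g) (s : Finset ι) : SignConst (spread s g) := by
  constructor <;> intro i j hi hj <;> unfold _root_.spread at * <;> split_ifs at * <;> first
    | exact hg.1 _ _ hi hj | exact hg.2 _ _ hi hj | omega

end Spread

open Function

section DotProduct

variable {ι R : Type*} [Fintype ι] [NonUnitalNonAssocSemiring R]

lemma dotProduct_eq_zero_of_disjoint_support {u v : ι → R} (h : Disjoint (support u) (support v)) :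
    u ⬝ᵥ v = 0 := by
  refine sum_eq_zero fun k _ => ?_
  by_cases hk : u k = 0
  · rw [hk, zero_mul]
  · rw [notMem_support.mp (Set.disjoint_left.mp h hk), mul_zero]

lemma dotProduct_eq_mul_sum_of_eqOn_support {u v : ι → R} {c : R}
    (h : Set.EqOn u (fun _ => c) (support v)) : u ⬝ᵥ v = c * ∑ i, v i := by
  rw [mul_sum]
  refine sum_congr rfl fun k _ => ?_
  by_cases hk : v k = 0
  · rw [hk, mul_zero, mul_zero]
  · rw [h hk]

lemma dotProduct_eq_zero_of_support_subset {u v : ι → R} {S : Set ι}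
    (hS : ∀ i ∈ S, ∀ j ∈ S, u i = u j) (hv : support v ⊆ S) (hsum : ∑ i, v i = 0) :
    u ⬝ᵥ v = 0 := by
  rcases (support v).eq_empty_or_nonempty with h | ⟨k₀, hk₀⟩
  · rw [support_eq_empty_iff.mp h, dotProduct_zero]
  · rw [dotProduct_eq_mul_sum_of_eqOn_support fun k hk => hS k (hv hk) k₀ (hv hk₀), hsum, mul_zero]

end DotProduct

structure Admissible {ι : Type*} [Fintype ι] (u : ι → ℤ) : Prop where
  ne_zero : u ≠ 0
  signConst : SignConst u
  sum_eq_zero : ∑ i, u i = 0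

lemma admissible_spread_w {ι : Type*} [Fintype ι] [LinearOrder ι] {s : Finset ι} (hs : 2 ≤ #s) :
    Admissible (spread s (w #s)) where
  ne_zero h := by
    obtain ⟨i, hi⟩ := card_pos.mp (by omega : 0 < #s)
    exact w_ne_zero hs (rank s i) (by simpa [spread, hi] using congrFun h i)
  signConst := (signConst_w _).spread s
  sum_eq_zero := (sum_spread s _).trans (sum_range_w _)

lemma admissible_w {n : ℕ} (hn : 2 ≤ n) : Admissible (fun i : Fin n => w n i) where
  ne_zero h := w_ne_zero hn 0 (congrFun h ⟨0, by omega⟩)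
  signConst := (signConst_w n).comp Fin.val
  sum_eq_zero := (Fin.sum_univ_eq_sum_range (w n) n).trans (sum_range_w n)

section Tree

variable {n : ℕ}

lemma leftChild_eq_spread (u : Fin n → ℤ) : leftChild u = spread (posIdx u) (w #(posIdx u)) := by
  funext i
  simp [leftChild, spread, rank, posIdx]

lemma rightChild_eq_spread (u : Fin n → ℤ) : rightChild u = spread (negIdx u) (w #(negIdx u)) := by
  funext i
  simp [rightChild, spread, rank, negIdx]

lemma support_leftChild_subset (u : Fin n → ℤ) : support (leftChild u) ⊆ {k | 0 < u k} := by
  rw [leftChild_eq_spread]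
  exact (support_spread_subset _ _).trans fun k hk => by simpa [posIdx] using hk

lemma support_rightChild_subset (u : Fin n → ℤ) : support (rightChild u) ⊆ {k | u k < 0} := by
  rw [rightChild_eq_spread]
  exact (support_spread_subset _ _).trans fun k hk => by simpa [negIdx] using hk

lemma labels_build_succ (f : ℕ) (u : Fin n → ℤ) :
    labels (build n (f + 1) u) =
      u :: ((if 2 ≤ #(posIdx u) then labels (build n f (leftChild u)) else []) ++
        (if 2 ≤ #(negIdx u) then labels (build n f (rightChild u)) else [])) := by
  simp only [build]
  split_ifs <;> simp [labels]

lemma pairwise_dotProduct_cons_append {u : Fin n → ℤ} (hu : SignConst u) {A B : List (Fin n → ℤ)}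
    (hA : ∀ v ∈ A, ∑ i, v i = 0 ∧ support v ⊆ {k | 0 < u k})
    (hB : ∀ v ∈ B, ∑ i, v i = 0 ∧ support v ⊆ {k | u k < 0})
    (pwA : A.Pairwise fun a b => a ⬝ᵥ b = 0) (pwB : B.Pairwise fun a b => a ⬝ᵥ b = 0) :
    (u :: (A ++ B)).Pairwise fun a b => a ⬝ᵥ b = 0 := by
  refine List.pairwise_cons.mpr ⟨fun v hv => ?_, List.pairwise_append.mpr ⟨pwA, pwB, ?_⟩⟩
  · rcases List.mem_append.mp hv with hv | hv
    · exact dotProduct_eq_zero_of_support_subset (fun i hi j hj => hu.1 i j hi hj) (hA v hv).2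
        (hA v hv).1
    · exact dotProduct_eq_zero_of_support_subset (fun i hi j hj => hu.2 i j hi hj) (hB v hv).2
        (hB v hv).1
  · intro a ha b hb
    refine dotProduct_eq_zero_of_disjoint_support (Set.disjoint_left.mpr fun k hka hkb => ?_)
    have hpos : 0 < u k := (hA a ha).2 hka
    have hneg : u k < 0 := (hB b hb).2 hkb
    omega

theorem labels_build (f : ℕ) (u : Fin n → ℤ) (hu : Admissible u) :
    (∀ v ∈ labels (build n f u), Admissible v ∧ support v ⊆ support u) ∧
      (labels (build n f u)).Pairwise fun a b => a ⬝ᵥ b = 0 := by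
  induction f generalizing u with
  | zero => simp [build, labels, hu]
  | succ f ih =>
    have child : ∀ {c : Prop} [Decidable c] {x : Fin n → ℤ} {S : Set (Fin n)},
        (c → Admissible x) → support x ⊆ S →
        (∀ v ∈ (if c then labels (build n f x) else []), Admissible v ∧ support v ⊆ S) ∧
          (if c then labels (build n f x) else []).Pairwise fun a b => a ⬝ᵥ b = 0 := by
      intro c _ x S hx hxS
      split_ifs with hc
      · obtain ⟨hmem, hpw⟩ := ih x (hx hc)
        exact ⟨fun v hv => ⟨(hmem v hv).1, (hmem v hv).2.trans hxS⟩, hpw⟩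
      · simp
    obtain ⟨hL, pwL⟩ := child (fun h => leftChild_eq_spread u ▸ admissible_spread_w h)
      (support_leftChild_subset u)
    obtain ⟨hR, pwR⟩ := child (fun h => rightChild_eq_spread u ▸ admissible_spread_w h)
      (support_rightChild_subset u)
    rw [labels_build_succ]
    refine ⟨fun v hv => ?_, pairwise_dotProduct_cons_append hu.signConst
      (fun v hv => ⟨(hL v hv).1.sum_eq_zero, (hL v hv).2⟩)
      (fun v hv => ⟨(hR v hv).1.sum_eq_zero, (hR v hv).2⟩) pwL pwR⟩
    rcases List.mem_cons.mp hv with rfl | hv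
    · exact ⟨hu, subset_rfl⟩
    rcases List.mem_append.mp hv with hv | hv
    · exact ⟨(hL v hv).1, (hL v hv).2.trans fun _ hk => ne_of_gt hk⟩
    · exact ⟨(hR v hv).1, (hR v hv).2.trans fun _ hk => ne_of_lt hk⟩

end Tree

/-- The vertex labels `u^1, …, u^{n-1}` of `T_n` (in depth-first order) form an
orthogonal set of nonzero vectors: distinct indices give dot product zero. -/
theorem stmt11 (n : ℕ) (hn : 2 ≤ n) :
    (∀ u ∈ labels (T n), u ≠ 0) ∧
    ∀ (i j : Fin (labels (T n)).length), i ≠ j →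
      ∑ k : Fin n, ((labels (T n)).get i) k * ((labels (T n)).get j) k = 0 := by
  obtain ⟨hmem, hpw⟩ := labels_build n _ (admissible_w hn)
  refine ⟨fun u hu => (hmem u hu).1.ne_zero, fun i j hij => ?_⟩
  rcases hij.lt_or_gt with h | h
  · exact hpw.rel_get_of_lt h
  · exact (dotProduct_comm _ _).trans (hpw.rel_get_of_lt h)
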